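/- arXiv:2201.04717 — 3 statements merged into one kernel-verified Lean document; each statement's English description precedes it below -/
import Mathlib

section
/- The condition '(a,A) dancing (b,B)', i.e. (aᵀAa)(bᵀBb) − (aᵀBa)(bᵀAb) = 0, is not equivalent to the collinearity condition (aᵀAa)(bᵀBb) − (aᵀBb)(bᵀAa) = 0: there exist symmetric invertible 3×3 matrices A, B and vectors a, b ∈ ℝ³ with aᵀAa ≠ 0, bᵀBb ≠ 0 such that the first expression vanishes but the second does not. -/
open Matrix

/-- The dancing condition `(aᵀAa)(bᵀBb) − (aᵀBa)(bᵀAb) = 0` is not equivalent to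
the collinearity condition `(aᵀAa)(bᵀBb) − (aᵀBb)(bᵀAa) = 0`. -/
theorem dancing_ne_collinear :
    ∃ (A B : Matrix (Fin 3) (Fin 3) ℝ) (a b : Fin 3 → ℝ),
      A.IsSymm ∧ B.IsSymm ∧ IsUnit A.det ∧ IsUnit B.det ∧
      a ≠ 0 ∧ b ≠ 0 ∧
      a ⬝ᵥ A *ᵥ a ≠ 0 ∧ b ⬝ᵥ B *ᵥ b ≠ 0 ∧
      (a ⬝ᵥ A *ᵥ a) * (b ⬝ᵥ B *ᵥ b) - (a ⬝ᵥ B *ᵥ a) * (b ⬝ᵥ A *ᵥ b) = 0 ∧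
      (a ⬝ᵥ A *ᵥ a) * (b ⬝ᵥ B *ᵥ b) - (a ⬝ᵥ B *ᵥ b) * (b ⬝ᵥ A *ᵥ a) ≠ 0 := by
  -- For `a = e₀`, `b = e₁` the two expressions are `A₀₀B₁₁ - B₀₀A₁₁` and `A₀₀B₁₁ - B₀₁A₁₀`,
  -- so diagonal `A`, `B` with `A₀₀B₁₁ = B₀₀A₁₁ ≠ 0` separate them.
  refine ⟨1, diagonal ![1, 1, 2], Pi.single 0 1, Pi.single 1 1, isSymm_one, isSymm_diagonal _, ?_⟩
  simp [Fin.prod_univ_three]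
end

section
/- Let b > 0, b ≠ 1, and (ẋ, ẏ, ȧ, ḃ) ∈ ℝ⁴. There exists P ∈ ℝ simultaneously satisfying [bẋ² + (b−1)ẏ²]P² − 2bẋẏP − b(b−1)ẏ² = 0 and ḃP² + 2bȧP − b²ḃ = 0 only if the sextic b⁴ḃ²ẋ⁴ − 4b³ȧḃẋ³ẏ + 2b²[((b−2)b−1)ḃ² − 2(b−1)ȧ²]ẋ²ẏ² + 4b(1−b²)ȧḃẋẏ³ + (b−1)²[(b−1)²ḃ² − 4bȧ²]ẏ⁴ vanishes. -/
/-- If the two quadratics in `P` coming from the infinitesimal dancing condition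
have a common root, then the dancing sextic vanishes. -/
theorem common_root_sextic (b xd yd ad bd : ℝ) (hb : 0 < b) (hb1 : b ≠ 1)
    (h : ∃ P : ℝ,
      (b * xd ^ 2 + (b - 1) * yd ^ 2) * P ^ 2 - 2 * b * xd * yd * P -
          b * (b - 1) * yd ^ 2 = 0 ∧
        bd * P ^ 2 + 2 * b * ad * P - b ^ 2 * bd = 0) :
    b ^ 4 * bd ^ 2 * xd ^ 4 - 4 * b ^ 3 * ad * bd * xd ^ 3 * yd +
        2 * b ^ 2 * (((b - 2) * b - 1) * bd ^ 2 - 2 * (b - 1) * ad ^ 2) * xd ^ 2 * yd ^ 2 +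
        4 * b * (1 - b ^ 2) * ad * bd * xd * yd ^ 3 +
        (b - 1) ^ 2 * ((b - 1) ^ 2 * bd ^ 2 - 4 * b * ad ^ 2) * yd ^ 4 = 0 := by
  have hb0 : b ≠ 0 := ne_of_gt hb
  obtain ⟨P, h1, h2⟩ := h
  have key : b ^ 2 *
      (b ^ 4 * bd ^ 2 * xd ^ 4 - 4 * b ^ 3 * ad * bd * xd ^ 3 * yd +
        2 * b ^ 2 * (((b - 2) * b - 1) * bd ^ 2 - 2 * (b - 1) * ad ^ 2) * xd ^ 2 * yd ^ 2 +
        4 * b * (1 - b ^ 2) * ad * bd * xd * yd ^ 3 +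
        (b - 1) ^ 2 * ((b - 1) ^ 2 * bd ^ 2 - 4 * b * ad ^ 2) * yd ^ 4) = 0 := by
    linear_combination
      (((-2*b*yd^2*ad*bd + 2*b*xd*yd*bd^2 + 2*b^2*yd^2*ad*bd + 2*b^2*xd^2*ad*bd) * P +
        (b*yd^2*bd^2 - 2*b^2*yd^2*bd^2 - 4*b^2*yd^2*ad^2 + 4*b^2*xd*yd*ad*bd + b^3*yd^2*bd^2 +
          4*b^3*yd^2*ad^2 + b^3*xd^2*bd^2 + 4*b^3*xd^2*ad^2))) * h1 +
      (((-2*b*yd^4*ad + 2*b*xd*yd^3*bd + 4*b^2*yd^4*ad - 2*b^2*xd*yd^3*bd + 4*b^2*xd^2*yd^2*ad -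
          2*b^2*xd^3*yd*bd - 2*b^3*yd^4*ad - 4*b^3*xd^2*yd^2*ad - 2*b^3*xd^4*ad) * P +
        (b*yd^4*bd - 3*b^2*yd^4*bd - 4*b^2*xd*yd^3*ad + 3*b^2*xd^2*yd^2*bd + 3*b^3*yd^4*bd +
          4*b^3*xd*yd^3*ad + 3*b^3*xd^2*yd^2*bd + 4*b^3*xd^3*yd*ad - b^4*yd^4*bd -
          2*b^4*xd^2*yd^2*bd - b^4*xd^4*bd))) * h2
  exact (mul_eq_zero.mp key).resolve_left (pow_ne_zero 2 hb0)
end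

section
/- Let l be a line in ℝP² and p a point on l. The set of non-incident pairs (P, L) with P on l, P ≠ p, and L a line through p, L ≠ l, is totally null for the dancing conformal structure: for any two such pairs (P, L) and (P̃, L̃), the dancing condition (P·L)(P̃·L̃) − (P̃·L)(P·L̃) = 0 holds. -/
open Matrix

/-- Explicit cross product on `Fin 3 → ℝ`. -/
def cross3 (a b : Fin 3 → ℝ) : Fin 3 → ℝ :=
  ![a 1 * b 2 - a 2 * b 1, a 2 * b 0 - a 0 * b 2, a 0 * b 1 - a 1 * b 0]

lemma cross3_smul_key (v a b : Fin 3 → ℝ) (ha : a ⬝ᵥ v = 0) (hb : b ⬝ᵥ v = 0) :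
    (v ⬝ᵥ v) • cross3 a b = (cross3 a b ⬝ᵥ v) • v := by
  simp only [dotProduct, Fin.sum_univ_three, cross3] at ha hb ⊢
  funext i
  fin_cases i
  · simp only [Pi.smul_apply, smul_eq_mul]
    simp
    linear_combination (v 1 * b 2 - v 2 * b 1) * ha - (v 1 * a 2 - v 2 * a 1) * hb
  · simp only [Pi.smul_apply, smul_eq_mul]
    simp
    linear_combination (v 2 * b 0 - v 0 * b 2) * ha - (v 2 * a 0 - v 0 * a 2) * hb
  · simp only [Pi.smul_apply, smul_eq_mul]
    simp
    linear_combination (v 0 * b 1 - v 1 * b 0) * ha - (v 0 * a 1 - v 1 * a 0) * hb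

lemma cross3_eq_smul (v a b : Fin 3 → ℝ) (hv : v ≠ 0)
    (ha : a ⬝ᵥ v = 0) (hb : b ⬝ᵥ v = 0) : ∃ c : ℝ, cross3 a b = c • v := by
  have hvv : v ⬝ᵥ v ≠ 0 := by
    simpa using (dotProduct_self_eq_zero (v := v)).not.mpr hv
  refine ⟨(cross3 a b ⬝ᵥ v) / (v ⬝ᵥ v), ?_⟩
  have h := cross3_smul_key v a b ha hb
  funext i
  have := congrFun h i
  simp only [Pi.smul_apply, smul_eq_mul] at this ⊢
  rw [div_mul_eq_mul_div, eq_div_iff hvv]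
  linear_combination this

/-- α-surfaces are totally null: for an incident pair `(p, l)` (so `l·p = 0`),
any two non-incident pairs `(P,L)`, `(P̃,L̃)` with `P, P̃` on `l` and `L, L̃`
through `p` satisfy the dancing condition. -/
theorem alpha_surface_totally_null (l p P Pt L Lt : Fin 3 → ℝ)
    (hl : l ≠ 0) (hp : p ≠ 0) (hlp : l ⬝ᵥ p = 0)
    (hP : l ⬝ᵥ P = 0) (hPt : l ⬝ᵥ Pt = 0)
    (hL : L ⬝ᵥ p = 0) (hLt : Lt ⬝ᵥ p = 0)
    (hPp : ∀ c : ℝ, P ≠ c • p) (hPtp : ∀ c : ℝ, Pt ≠ c • p)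
    (hLl : ∀ c : ℝ, L ≠ c • l) (hLtl : ∀ c : ℝ, Lt ≠ c • l)
    (hni : P ⬝ᵥ L ≠ 0) (hni' : Pt ⬝ᵥ Lt ≠ 0) :
    (P ⬝ᵥ L) * (Pt ⬝ᵥ Lt) - (Pt ⬝ᵥ L) * (P ⬝ᵥ Lt) = 0 := by
  have hP' : P ⬝ᵥ l = 0 := by rwa [dotProduct_comm]
  have hPt' : Pt ⬝ᵥ l = 0 := by rwa [dotProduct_comm]
  obtain ⟨c1, h1⟩ := cross3_eq_smul l P Pt hl hP' hPt'
  obtain ⟨c2, h2⟩ := cross3_eq_smul p L Lt hp hL hLt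
  have key : (P ⬝ᵥ L) * (Pt ⬝ᵥ Lt) - (Pt ⬝ᵥ L) * (P ⬝ᵥ Lt)
      = cross3 P Pt ⬝ᵥ cross3 L Lt := by
    simp only [dotProduct, Fin.sum_univ_three, cross3]
    simp
    ring
  rw [key, h1, h2]
  simp only [dotProduct, Fin.sum_univ_three, Pi.smul_apply, smul_eq_mul]
  simp only [dotProduct, Fin.sum_univ_three] at hlp
  linear_combination c1 * c2 * hlp
end
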